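/- Every piecewise linear function on ℝ^n (piecewise linear with respect to some complete polyhedral fan) is the difference of two piecewise linear convex functions. -/

import Mathlib

/-!
Let `g = h + spread ℓ`, where `spread ℓ x = ∑ i j, |⟨ℓ i - ℓ j, x⟩|` is a sum of support functions
of segments, hence itself the support function of a polytope. Where `h` switches from `ℓ a` to
`ℓ b` across a wall, the kink of `|⟨ℓ a - ℓ b, ·⟩|` outweighs the (possibly concave) kink of `h`,
so `g` satisfies the midpoint inequality at every point for arbitrarily small steps in every
direction; by a maximum principle on segments, a continuous function with this local property is
convex. A convex function that is linear on each piece of a finite closed cover is the maximum of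
its linear functions on the pieces with nonempty interior, so `g` is a polytope support function
too, and `h = g - spread ℓ`.
-/

open Pointwise Set Filter Topology Matrix

theorem le_max_of_frequently_midpoint {ψ : ℝ → ℝ} (hψ : Continuous ψ) {a b : ℝ} (hab : a ≤ b)
    (hmid : ∀ t ∈ Ioo a b, ∃ᶠ ε in 𝓝[>] 0, 2 * ψ t ≤ ψ (t - ε) + ψ (t + ε)) :
    ∀ s ∈ Icc a b, ψ s ≤ max (ψ a) (ψ b) := by
  obtain ⟨t₀, ht₀, hmax⟩ := isCompact_Icc.exists_isMaxOn (nonempty_Icc.2 hab) hψ.continuousOn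
  rw [isMaxOn_iff] at hmax
  -- the argument runs at the largest maximiser `t`, where `ψ` is strictly smaller to the right
  obtain ⟨t, ⟨htI, htψ⟩, hgreatest⟩ :=
    (isCompact_Icc.inter_right (isClosed_singleton.preimage hψ)).exists_isGreatest
      (⟨t₀, ht₀, rfl⟩ : (Icc a b ∩ ψ ⁻¹' {ψ t₀}).Nonempty)
  replace htψ : ψ t = ψ t₀ := htψ
  suffices ψ t ≤ max (ψ a) (ψ b) from fun s hs => (hmax s hs).trans (htψ ▸ this)
  rcases htI.1.eq_or_lt with rfl | hat
  · exact le_max_left _ _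
  rcases htI.2.eq_or_lt with rfl | htb
  · exact le_max_right _ _
  obtain ⟨ε, hε, hε0, hεt⟩ := ((hmid t ⟨hat, htb⟩).and_eventually
    (Ioo_mem_nhdsGT (lt_min (sub_pos.2 hat) (sub_pos.2 htb)))).exists
  have hleft : ψ (t - ε) ≤ ψ t :=
    htψ ▸ hmax _ ⟨by linarith [min_le_left (t - a) (b - t)], by linarith⟩
  have hright : ψ (t + ε) < ψ t := by
    have hεI : t + ε ∈ Icc a b := ⟨by linarith, by linarith [min_le_right (t - a) (b - t)]⟩
    refine (htψ ▸ hmax _ hεI).lt_of_ne fun h => ?_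
    linarith [hgreatest ⟨hεI, h.trans htψ⟩]
  linarith

theorem convexOn_univ_real_of_frequently_midpoint {φ : ℝ → ℝ} (hφ : Continuous φ)
    (hmid : ∀ t, ∃ᶠ ε in 𝓝[>] 0, 2 * φ t ≤ φ (t - ε) + φ (t + ε)) : ConvexOn ℝ univ φ := by
  refine convexOn_iff_slope_mono_adjacent.2 ⟨convex_univ, fun x y z _ _ hxy hyz => ?_⟩
  set S := (φ z - φ x) / (z - x)
  have hS : S * (z - x) = φ z - φ x := div_mul_cancel₀ _ (by linarith)
  -- subtracting the chord through `x` and `z` keeps the midpoint inequalities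
  have hchord := le_max_of_frequently_midpoint (ψ := fun t => φ t - S * (t - x)) (by fun_prop)
    (hxy.trans hyz).le (fun t _ => (hmid t).mono fun ε hε => by
      have : S * (t - ε - x) + S * (t + ε - x) = 2 * (S * (t - x)) := by ring
      linarith) y ⟨hxy.le, hyz.le⟩
  simp only [sub_self, mul_zero, sub_zero, hS, sub_sub_cancel, max_self] at hchord
  calc (φ y - φ x) / (y - x) ≤ S := by rw [div_le_iff₀ (by linarith)]; linarith
    _ ≤ (φ z - φ y) / (z - y) := by
      rw [le_div_iff₀ (by linarith)]
      linarith

section TopologicalVectorSpace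

variable {E : Type*} [AddCommGroup E] [Module ℝ E] [TopologicalSpace E] [ContinuousAdd E]
  [ContinuousSMul ℝ E]

theorem convexOn_univ_of_frequently_midpoint {g : E → ℝ} (hg : Continuous g)
    (hmid : ∀ x y, ∃ᶠ ε in 𝓝[>] (0 : ℝ), 2 * g x ≤ g (x - ε • y) + g (x + ε • y)) :
    ConvexOn ℝ univ g := by
  refine ⟨convex_univ, fun x _ y _ a b ha hb hab => ?_⟩
  have hline : ConvexOn ℝ univ fun t : ℝ => g (x + t • (y - x)) :=
    convexOn_univ_real_of_frequently_midpoint (by fun_prop) fun t =>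
      (hmid (x + t • (y - x)) (y - x)).mono fun ε hε => by
        simpa only [sub_smul, add_smul, add_sub_assoc, add_assoc] using hε
  have := hline.2 (mem_univ 0) (mem_univ 1) ha hb hab
  obtain rfl : b = 1 - a := by linarith
  have hpoint : x + (1 - a) • (y - x) = a • x + (1 - a) • y := by module
  simpa [hpoint] using this

theorem eventually_exists_mem_add_smul_of_cover {κ : Type*} [Finite κ] {C : κ → Set E}
    (hclosed : ∀ i, IsClosed (C i)) (hconv : ∀ i, Convex ℝ (C i)) (hcover : ∀ x, ∃ i, x ∈ C i)
    (x y : E) : ∀ᶠ ε in 𝓝[>] (0 : ℝ), ∃ i, x ∈ C i ∧ x + ε • y ∈ C i := by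
  obtain ⟨i, hi⟩ : ∃ i, ∃ᶠ ε in 𝓝[>] (0 : ℝ), x + ε • y ∈ C i :=
    frequently_exists.1 (Eventually.frequently (Eventually.of_forall fun ε => hcover _))
  have hx : x ∈ C i := by
    have hray : Tendsto (fun ε : ℝ => x + ε • y) (𝓝[>] 0) (𝓝 x) := by
      have hcont : Continuous fun ε : ℝ => x + ε • y := by fun_prop
      simpa using (hcont.tendsto 0).mono_left nhdsWithin_le_nhds
    exact (hclosed i).mem_of_frequently_of_tendsto hi hray
  obtain ⟨ε₀, hε₀y, hε₀⟩ := (hi.and_eventually self_mem_nhdsWithin).exists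
  filter_upwards [Ioo_mem_nhdsGT hε₀] with ε hε
  refine ⟨i, hx, ?_⟩
  have := (hconv i).add_smul_mem hx hε₀y
    ⟨div_nonneg hε.1.le hε₀.le, (div_le_one hε₀).2 hε.2.le⟩
  rwa [smul_smul, div_mul_cancel₀ _ hε₀.ne'] at this

end TopologicalVectorSpace

section PiecewiseLinear

variable {ι κ κ' : Type*} [Fintype ι]

theorem isClosed_setOf_forall_dotProduct_nonneg (A : Finset (ι → ℝ)) :
    IsClosed {x : ι → ℝ | ∀ a ∈ A, 0 ≤ a ⬝ᵥ x} := by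
  simp only [ofPred_forall]
  exact isClosed_biInter fun a _ => isClosed_le continuous_const (by fun_prop)

theorem convex_setOf_forall_dotProduct_nonneg (A : Finset (ι → ℝ)) :
    Convex ℝ {x : ι → ℝ | ∀ a ∈ A, 0 ≤ a ⬝ᵥ x} := by
  intro x hx y hy s t hs ht _ a ha
  rw [dotProduct_add, dotProduct_smul, dotProduct_smul, smul_eq_mul, smul_eq_mul]
  exact add_nonneg (mul_nonneg hs (hx a ha)) (mul_nonneg ht (hy a ha))

def IsPolytopeSupportFunction (f : (ι → ℝ) → ℝ) : Prop :=
  ∃ (F : Finset (ι → ℝ)) (hF : F.Nonempty), ∀ x, f x = F.sup' hF (· ⬝ᵥ x)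

structure LinearOnPieces (f : (ι → ℝ) → ℝ) (K : κ → Set (ι → ℝ)) (L : κ → ι → ℝ) : Prop where
  isClosed : ∀ i, IsClosed (K i)
  exists_mem : ∀ x, ∃ i, x ∈ K i
  eq_dotProduct : ∀ i, ∀ x ∈ K i, f x = L i ⬝ᵥ x

namespace LinearOnPieces

variable {f g : (ι → ℝ) → ℝ} {K : κ → Set (ι → ℝ)} {L : κ → ι → ℝ}
  {K' : κ' → Set (ι → ℝ)} {L' : κ' → ι → ℝ}

theorem continuous [Finite κ] (hf : LinearOnPieces f K L) : Continuous f :=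
  (locallyFinite_of_finite K).continuous (iUnion_eq_univ_iff.2 hf.exists_mem) hf.isClosed
    fun i => (continuous_const.dotProduct continuous_id).continuousOn.congr (hf.eq_dotProduct i)

theorem add (hf : LinearOnPieces f K L) (hg : LinearOnPieces g K' L') :
    LinearOnPieces (f + g) (fun p : κ × κ' => K p.1 ∩ K' p.2) (fun p => L p.1 + L' p.2) where
  isClosed p := (hf.isClosed p.1).inter (hg.isClosed p.2)
  exists_mem x :=
    let ⟨i, hi⟩ := hf.exists_mem x
    let ⟨j, hj⟩ := hg.exists_mem x
    ⟨(i, j), hi, hj⟩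
  eq_dotProduct p x hx := by
    rw [Pi.add_apply, add_dotProduct, hf.eq_dotProduct _ x hx.1, hg.eq_dotProduct _ x hx.2]

theorem dotProduct_le_of_nonempty_interior (hf : LinearOnPieces f K L)
    (hconv : ConvexOn ℝ univ f) {i : κ} (hi : (interior (K i)).Nonempty) (x : ι → ℝ) :
    L i ⬝ᵥ x ≤ f x := by
  obtain ⟨x₀, hx₀⟩ := hi
  have hmin : IsLocalMin (f - (L i ⬝ᵥ ·)) x₀ := by
    filter_upwards [mem_interior_iff_mem_nhds.1 hx₀] with y hy
    simp [hf.eq_dotProduct i y hy, hf.eq_dotProduct i x₀ (interior_subset hx₀)]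
  have := IsMinOn.of_isLocalMin_of_convex_univ hmin
    (hconv.sub ((dotProductBilin ℝ ℝ (L i)).concaveOn convex_univ)) x
  simp only [Pi.sub_apply, hf.eq_dotProduct i x₀ (interior_subset hx₀), sub_self] at this
  linarith

theorem isPolytopeSupportFunction [Finite κ] (hf : LinearOnPieces f K L)
    (hconv : ConvexOn ℝ univ f) : IsPolytopeSupportFunction f := by
  classical
  have := Fintype.ofFinite κ
  -- only the pieces with nonempty interior contribute; their interiors are dense by Baire
  set F := (Finset.univ.filter fun i => (interior (K i)).Nonempty).image L
  have hdense : Dense (⋃ i, interior (K i)) :=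
    dense_iUnion_interior_of_closed hf.isClosed (iUnion_eq_univ_iff.2 hf.exists_mem)
  have hmemF : ∀ i, ∀ x ∈ interior (K i), L i ∈ F := fun i x hx =>
    Finset.mem_image_of_mem L (Finset.mem_filter.2 ⟨Finset.mem_univ _, x, hx⟩)
  obtain ⟨x₀, hx₀⟩ := hdense.nonempty
  obtain ⟨i₀, hi₀⟩ := mem_iUnion.1 hx₀
  have hF : F.Nonempty := ⟨_, hmemF i₀ x₀ hi₀⟩
  have hle : ∀ x, F.sup' hF (· ⬝ᵥ x) ≤ f x := fun x => F.sup'_le _ _ fun m hm => by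
    obtain ⟨i, hi, rfl⟩ := Finset.mem_image.1 hm
    exact hf.dotProduct_le_of_nonempty_interior hconv (Finset.mem_filter.1 hi).2 x
  have hge : ∀ x, f x ≤ F.sup' hF (· ⬝ᵥ x) := by
    have hclosed : IsClosed {x | f x ≤ F.sup' hF (· ⬝ᵥ x)} :=
      isClosed_le hf.continuous (Continuous.finset_sup'_apply hF fun m _ => by fun_prop)
    refine fun x => hclosed.closure_subset_iff.2 (fun y hy => ?_) (hdense x)
    obtain ⟨i, hi⟩ := mem_iUnion.1 hy
    rw [mem_ofPred_eq, hf.eq_dotProduct i y (interior_subset hi)]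
    exact F.le_sup' (· ⬝ᵥ y) (hmemF i y hi)
  exact ⟨F, hF, fun x => (hge x).antisymm (hle x)⟩

end LinearOnPieces

namespace IsPolytopeSupportFunction

variable {f g : (ι → ℝ) → ℝ}

theorem zero : IsPolytopeSupportFunction (0 : (ι → ℝ) → ℝ) :=
  ⟨{0}, Finset.singleton_nonempty 0, fun x => by simp⟩

theorem abs_dotProduct (v : ι → ℝ) : IsPolytopeSupportFunction fun x => |v ⬝ᵥ x| := by
  classical
  exact ⟨{v, -v}, Finset.insert_nonempty _ _, fun x => by
    simp [neg_dotProduct, abs_eq_max_neg]⟩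

theorem add (hf : IsPolytopeSupportFunction f) (hg : IsPolytopeSupportFunction g) :
    IsPolytopeSupportFunction (f + g) := by
  classical
  obtain ⟨F, hF, hf⟩ := hf
  obtain ⟨G, hG, hg⟩ := hg
  refine ⟨F + G, hF.add hG, fun x => ?_⟩
  rw [Pi.add_apply, hf, hg]
  refine Eq.symm ((Finset.sup'_image₂_left (f := (· + ·)) _ _).trans ?_)
  simp only [add_dotProduct, ← Finset.add_sup', ← Finset.sup'_add]

theorem sum {α : Type*} (s : Finset α) {f : α → (ι → ℝ) → ℝ}
    (hf : ∀ a ∈ s, IsPolytopeSupportFunction (f a)) :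
    IsPolytopeSupportFunction (∑ a ∈ s, f a) :=
  Finset.sum_induction f _ (fun _ _ => add) zero hf

theorem exists_linearOnPieces (hf : IsPolytopeSupportFunction f) :
    ∃ (F : Finset (ι → ℝ)) (K : F → Set (ι → ℝ)), LinearOnPieces f K (↑) := by
  obtain ⟨F, hF, hf⟩ := hf
  refine ⟨F, fun m => {x | ∀ m' ∈ F, m' ⬝ᵥ x ≤ (m : ι → ℝ) ⬝ᵥ x}, ⟨fun m => ?_, fun x => ?_,
    fun m x hx => ?_⟩⟩
  · simp only [ofPred_forall]
    exact isClosed_biInter fun m' _ => isClosed_le (by fun_prop) (by fun_prop)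
  · obtain ⟨m, hm, hmax⟩ := F.exists_mem_eq_sup' hF (· ⬝ᵥ x)
    exact ⟨⟨m, hm⟩, fun m' hm' => hmax ▸ F.le_sup' (· ⬝ᵥ x) hm'⟩
  · rw [hf]
    exact (F.sup'_le _ _ hx).antisymm (F.le_sup' (· ⬝ᵥ x) m.2)

end IsPolytopeSupportFunction

end PiecewiseLinear

section Spread

variable {ι κ : Type*} [Fintype ι] [Fintype κ]

def spread (ℓ : κ → ι → ℝ) (x : ι → ℝ) : ℝ :=
  ∑ i, ∑ j, |(ℓ i - ℓ j) ⬝ᵥ x|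

theorem isPolytopeSupportFunction_spread (ℓ : κ → ι → ℝ) :
    IsPolytopeSupportFunction (spread ℓ) := by
  have : spread ℓ = ∑ i, ∑ j, fun x => |(ℓ i - ℓ j) ⬝ᵥ x| := by
    ext x; simp [spread, Finset.sum_apply]
  exact this ▸ .sum _ fun i _ => .sum _ fun j _ => .abs_dotProduct _

theorem continuous_spread (ℓ : κ → ι → ℝ) : Continuous (spread ℓ) := by
  unfold spread; fun_prop

theorem two_mul_spread_add_le {ℓ : κ → ι → ℝ} {a b : κ} {x : ι → ℝ}
    (hx : (ℓ a - ℓ b) ⬝ᵥ x = 0) (y : ι → ℝ) :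
    2 * spread ℓ x + 2 * |(ℓ a - ℓ b) ⬝ᵥ y| ≤ spread ℓ (x - y) + spread ℓ (x + y) := by
  set Δ : κ → κ → ℝ := fun i j =>
    |(ℓ i - ℓ j) ⬝ᵥ (x - y)| + |(ℓ i - ℓ j) ⬝ᵥ (x + y)| - 2 * |(ℓ i - ℓ j) ⬝ᵥ x|
  have hΔ : ∀ i j, 0 ≤ Δ i j := fun i j => by
    have := abs_add_le ((ℓ i - ℓ j) ⬝ᵥ (x - y)) ((ℓ i - ℓ j) ⬝ᵥ (x + y))
    rw [← dotProduct_add, sub_add_add_cancel, ← two_smul ℝ x, dotProduct_smul, smul_eq_mul,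
      abs_mul, abs_two] at this
    linarith
  have hΔab : Δ a b = 2 * |(ℓ a - ℓ b) ⬝ᵥ y| := by
    simp only [Δ, dotProduct_sub, dotProduct_add, hx, zero_sub, zero_add, abs_neg, abs_zero]
    ring
  have := calc
    2 * |(ℓ a - ℓ b) ⬝ᵥ y| = Δ a b := hΔab.symm
    _ ≤ ∑ j, Δ a j := Finset.single_le_sum (fun j _ => hΔ a j) (Finset.mem_univ b)
    _ ≤ ∑ i, ∑ j, Δ i j := Finset.single_le_sum (f := fun i => ∑ j, Δ i j)
      (fun i _ => Finset.sum_nonneg fun j _ => hΔ i j) (Finset.mem_univ a)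
  simp only [Δ, Finset.sum_sub_distrib, Finset.sum_add_distrib, ← Finset.mul_sum] at this
  simp only [spread]
  linarith

theorem two_mul_add_spread_le {h : (ι → ℝ) → ℝ} {C : κ → Set (ι → ℝ)} {ℓ : κ → ι → ℝ}
    (hlin : ∀ i, ∀ x ∈ C i, h x = ℓ i ⬝ᵥ x) {a b : κ} {x y : ι → ℝ} (hxa : x ∈ C a)
    (hxb : x ∈ C b) (hya : x - y ∈ C a) (hyb : x + y ∈ C b) :
    2 * (h x + spread ℓ x) ≤ (h (x - y) + spread ℓ (x - y)) + (h (x + y) + spread ℓ (x + y)) := by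
  have hx : (ℓ a - ℓ b) ⬝ᵥ x = 0 := by
    rw [sub_dotProduct, ← hlin a x hxa, ← hlin b x hxb, sub_self]
  have hspread := two_mul_spread_add_le hx y
  have hle_abs := le_abs_self ((ℓ a - ℓ b) ⬝ᵥ y)
  have habs_nonneg := abs_nonneg ((ℓ a - ℓ b) ⬝ᵥ y)
  rw [hlin a x hxa, hlin a _ hya, hlin b _ hyb]
  simp only [sub_dotProduct, dotProduct_sub, dotProduct_add] at hx hle_abs habs_nonneg hspread ⊢
  linarith

theorem LinearOnPieces.convexOn_add_spread {h : (ι → ℝ) → ℝ} {C : κ → Set (ι → ℝ)}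
    {ℓ : κ → ι → ℝ} (hh : LinearOnPieces h C ℓ) (hconv : ∀ i, Convex ℝ (C i)) :
    ConvexOn ℝ univ (h + spread ℓ) := by
  refine convexOn_univ_of_frequently_midpoint (hh.continuous.add (continuous_spread ℓ))
    fun x y => Eventually.frequently ?_
  filter_upwards [eventually_exists_mem_add_smul_of_cover hh.isClosed hconv hh.exists_mem x (-y),
    eventually_exists_mem_add_smul_of_cover hh.isClosed hconv hh.exists_mem x y]
    with ε ⟨a, hxa, hya⟩ ⟨b, hxb, hyb⟩
  rw [smul_neg, ← sub_eq_add_neg] at hya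
  exact two_mul_add_spread_le hh.eq_dotProduct hxa hxb hya hyb

end Spread

/-- every piecewise linear function on `ℝ^n` (linear on each
cone of a finite complete fan of polyhedral cones) is the difference of two
piecewise linear convex functions (i.e. maxima of finitely many linear
functions, equivalently support functions of convex polytopes). -/
theorem pl_function_diff_of_convex (n : ℕ) (h : (Fin n → ℝ) → ℝ)
    (k : ℕ) (A : Fin k → Finset (Fin n → ℝ)) (ℓ : Fin k → (Fin n → ℝ))
    -- the polyhedral cones `C i = {x | ∀ a ∈ A i, ⟨a, x⟩ ≥ 0}` cover `ℝ^n`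
    (hcover : ∀ x : Fin n → ℝ, ∃ i, ∀ a ∈ A i, 0 ≤ dotProduct a x)
    -- `h` is linear, given by `ℓ i`, on each cone `C i`
    (hlin : ∀ i, ∀ x : Fin n → ℝ, (∀ a ∈ A i, 0 ≤ dotProduct a x) →
      h x = dotProduct (ℓ i) x) :
    ∃ (F G : Finset (Fin n → ℝ)) (hF : F.Nonempty) (hG : G.Nonempty),
      ∀ x : Fin n → ℝ,
        h x = F.sup' hF (fun m => dotProduct m x)
              - G.sup' hG (fun m => dotProduct m x) := by
  have hh : LinearOnPieces h (fun i => {x | ∀ a ∈ A i, 0 ≤ a ⬝ᵥ x}) ℓ :=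
    ⟨fun i => isClosed_setOf_forall_dotProduct_nonneg _, hcover, hlin⟩
  obtain ⟨G', K, hK⟩ := (isPolytopeSupportFunction_spread ℓ).exists_linearOnPieces
  obtain ⟨F, hF, hsum⟩ := (hh.add hK).isPolytopeSupportFunction
    (hh.convexOn_add_spread fun i => convex_setOf_forall_dotProduct_nonneg _)
  obtain ⟨G, hG, hspread⟩ := isPolytopeSupportFunction_spread ℓ
  exact ⟨F, G, hF, hG, fun x => by rw [← hsum, ← hspread, Pi.add_apply, add_sub_cancel_right]⟩
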